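/- For normal sequences the ψ-Pascal matrices form a group: if Σ_{m=0}^{N} (−1)^m·C_ψ(N,m) = 0 for every integer N ≥ 1, then for every x ∈ K one has P_ψ[x]·P_ψ[−x] = I, the n×n identity matrix. -/

import Mathlib

/-- The ψ-binomial coefficient `C_ψ(n,k) = φ(n)/(φ(k)·φ(n−k))`. -/
noncomputable def psiBinom {K : Type*} [Field K] (φ : ℕ → K) (n k : ℕ) : K :=
  φ n / (φ k * φ (n - k))

/-- The `n×n` ψ-Pascal matrix `P_ψ[x]`. -/
noncomputable def psiPascal {K : Type*} [Field K] (φ : ℕ → K) (n : ℕ) (x : K) :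
    Matrix (Fin n) (Fin n) K :=
  Matrix.of fun i j =>
    if (j : ℕ) ≤ (i : ℕ) then x ^ ((i : ℕ) - (j : ℕ)) * psiBinom φ i j else 0

/-!
Row `i` of `P_ψ[x]·P_ψ[-x]` meets column `j ≤ i` in
`Σ_{j ≤ k ≤ i} x^{i-k} (-x)^{k-j} C_ψ(i,k) C_ψ(k,j)`. The ψ-analogue of the identity
`C(i,k) C(k,j) = C(i,j) C(i-j,k-j)` turns this into
`x^{i-j} C_ψ(i,j) Σ_m (-1)^m C_ψ(i-j,m)`, which is `1` on the diagonal and vanishes below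
it by normality. Above the diagonal the product of two lower-triangular matrices is `0`.
-/

open Finset

section psiBinom

variable {K : Type*} [Field K] {φ : ℕ → K}

theorem psiBinom_self (h0 : φ 0 = 1) (hφ : ∀ n, φ n ≠ 0) (n : ℕ) : psiBinom φ n n = 1 := by
  simp [psiBinom, h0, hφ]

theorem psiBinom_mul_psiBinom (hφ : ∀ n, φ n ≠ 0) {i j k : ℕ} (hjk : j ≤ k) (hki : k ≤ i) :
    psiBinom φ i k * psiBinom φ k j = psiBinom φ i j * psiBinom φ (i - j) (k - j) := by
  have hsub : i - j - (k - j) = i - k := by omega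
  simp only [psiBinom, hsub]
  field_simp [hφ]

theorem sum_psiBinom_mul_pow_mul_neg_pow (φ : ℕ → K) (N : ℕ) (x : K) :
    ∑ m ∈ range (N + 1), psiBinom φ N m * (x ^ (N - m) * (-x) ^ m) =
      x ^ N * ∑ m ∈ range (N + 1), (-1) ^ m * psiBinom φ N m := by
  rw [mul_sum]
  refine sum_congr rfl fun m hm => ?_
  have hxN : x ^ (N - m) * x ^ m = x ^ N := by
    rw [← pow_add, Nat.sub_add_cancel (Nat.lt_succ_iff.mp (mem_range.mp hm))]
  rw [neg_pow, ← hxN]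
  ring

end psiBinom

section psiPascal

variable {K : Type*} [Field K] (φ : ℕ → K) {n : ℕ}

theorem psiPascal_blockTriangular (x : K) :
    (psiPascal φ n x).BlockTriangular OrderDual.toDual := fun i j hij => by
  simp [psiPascal, not_le.mpr (OrderDual.toDual_lt_toDual.mp hij)]

theorem psiPascal_mul_apply_of_le (hφ : ∀ n, φ n ≠ 0) (x y : K) {i j : Fin n} (hji : j ≤ i) :
    (psiPascal φ n x * psiPascal φ n y) i j =
      psiBinom φ i j *
        ∑ m ∈ range ((i : ℕ) - j + 1), psiBinom φ (i - j) m * (x ^ (i - j - m) * y ^ m) := by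
  set f : ℕ → K := fun k => x ^ ((i : ℕ) - k) * psiBinom φ i k * (y ^ (k - j) * psiBinom φ k j)
  have hterms : ∀ k : Fin n, psiPascal φ n x i k * psiPascal φ n y k j =
      if (j : ℕ) ≤ k ∧ (k : ℕ) ≤ i then f k else 0 := by
    intro k
    simp only [psiPascal, Matrix.of_apply, f]
    split_ifs <;> first | (exfalso; omega) | ring
  have hsupport : (range n).filter (fun k => (j : ℕ) ≤ k ∧ k ≤ i) = Icc (j : ℕ) i := by
    ext k
    simp only [mem_filter, mem_range, mem_Icc]
    omega
  have hrange : (i : ℕ) + 1 - j = i - j + 1 := by omega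
  rw [Matrix.mul_apply, sum_congr rfl fun k _ => hterms k,
    Fin.sum_univ_eq_sum_range (fun k => if (j : ℕ) ≤ k ∧ k ≤ i then f k else 0),
    ← sum_filter, hsupport, ← Ico_add_one_right_eq_Icc, sum_Ico_eq_sum_range, hrange, mul_sum]
  refine sum_congr rfl fun m hm => ?_
  have hm : m ≤ i - j := Nat.lt_succ_iff.mp (mem_range.mp hm)
  have hsub : (i : ℕ) - (j + m) = i - j - m := by omega
  have hbinom := psiBinom_mul_psiBinom hφ (Nat.le_add_right (j : ℕ) m) (by omega : (j : ℕ) + m ≤ i)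
  simp only [Nat.add_sub_cancel_left] at hbinom
  simp only [f, hsub, Nat.add_sub_cancel_left]
  linear_combination (x ^ ((i : ℕ) - j - m) * y ^ m) * hbinom

end psiPascal

theorem psiPascal_mul_neg_of_normal_general {K : Type*} [Field K]
    (φ : ℕ → K) (h0 : φ 0 = 1) (hφ : ∀ n, φ n ≠ 0) (n : ℕ)
    (hnormal : ∀ N : ℕ, 1 ≤ N →
      ∑ m ∈ Finset.range (N + 1), (-1 : K) ^ m * psiBinom φ N m = 0) :
    ∀ x : K, psiPascal φ n x * psiPascal φ n (-x) = 1 := by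
  intro x
  ext i j
  rcases lt_trichotomy i j with hij | rfl | hji
  · rw [((psiPascal_blockTriangular φ x).mul (psiPascal_blockTriangular φ (-x))) hij,
      Matrix.one_apply_ne hij.ne]
  · simp [psiPascal_mul_apply_of_le φ hφ x (-x) le_rfl, psiBinom_self h0 hφ]
  · have hN : 1 ≤ (i : ℕ) - j := by omega
    rw [psiPascal_mul_apply_of_le φ hφ x (-x) hji.le, sum_psiBinom_mul_pow_mul_neg_pow,
      hnormal _ hN, mul_zero, mul_zero, Matrix.one_apply_ne hji.ne']

/-- For normal sequences the ψ-Pascal matrices form a group: if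
`Σ_{m=0}^{N} (−1)^m·C_ψ(N,m) = 0` for every `N ≥ 1`, then
`P_ψ[x]·P_ψ[−x] = I` for every `x ∈ K`. -/
theorem psiPascal_mul_neg_of_normal {K : Type*} [Field K] [CharZero K]
    (φ : ℕ → K) (h0 : φ 0 = 1) (hφ : ∀ n, φ n ≠ 0) (n : ℕ)
    (hnormal : ∀ N : ℕ, 1 ≤ N →
      ∑ m ∈ Finset.range (N + 1), (-1 : K) ^ m * psiBinom φ N m = 0) :
    ∀ x : K, psiPascal φ n x * psiPascal φ n (-x) = 1 :=
  psiPascal_mul_neg_of_normal_general φ h0 hφ n hnormal
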